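/- Let 𝕂 = ℝ or ℂ, let A and B be self-adjoint n×n matrices over 𝕂, and let 1 ≤ k ≤ n. Then √(Σ_{i=1}^k σ_{n−(i−1)}(A)²) ≥ √(Σ_{i=1}^k σ_{n−(i−1)}(B)²) − ‖A − B‖, where ‖·‖ is the Frobenius norm and σ_{n−(i−1)}(·) denotes the (n−i+1)-st largest singular value (so each sum is over the k smallest singular values). -/

import Mathlib

open scoped Matrix BigOperators ComplexOrder
open MeasureTheory ProbabilityTheory

noncomputable section

namespace SmoothedBM

variable {𝕂 : Type*} [RCLike 𝕂]

/-- Real Frobenius inner product `⟨A,B⟩ = Re tr(Aᴴ B)`. -/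
def finner {n k : ℕ} (A B : Matrix (Fin n) (Fin k) 𝕂) : ℝ :=
  RCLike.re (Matrix.trace (Aᴴ * B))

/-- Frobenius norm. -/
def fnorm {n k : ℕ} (A : Matrix (Fin n) (Fin k) 𝕂) : ℝ :=
  Real.sqrt (finner A A)

/-- Spectral (operator) norm: the largest singular value, i.e. the square root of the
largest eigenvalue of `Aᴴ * A`. -/
def opNorm {n k : ℕ} (A : Matrix (Fin n) (Fin k) 𝕂) : ℝ :=
  ⨆ i, Real.sqrt ((Matrix.isHermitian_conjTranspose_mul_self A).eigenvalues i)

/-- The `k`-th (smallest) singular value of an `n × k` matrix: the square root of the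
smallest eigenvalue of `Yᴴ * Y`.  (It is `0` when `k > n`.) -/
def sigmaLast {n k : ℕ} (Y : Matrix (Fin n) (Fin k) 𝕂) : ℝ :=
  Real.sqrt (⨅ i, (Matrix.isHermitian_conjTranspose_mul_self Y).eigenvalues i)

/-- Squared singular values of an `n × n` matrix, sorted in increasing order
(eigenvalues of `Aᴴ * A`, sorted). -/
def svSqAsc {n : ℕ} (A : Matrix (Fin n) (Fin n) 𝕂) : Fin n → ℝ := fun i =>
  (Matrix.isHermitian_conjTranspose_mul_self A).eigenvalues
    (Tuple.sort ((Matrix.isHermitian_conjTranspose_mul_self A).eigenvalues) i)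

/-- Sum of the squares of the `k` smallest singular values of an `n × n` matrix. -/
def sumSqSmallestSV {n : ℕ} (k : ℕ) (A : Matrix (Fin n) (Fin n) 𝕂) : ℝ :=
  ∑ i : Fin n, if (i : ℕ) < k then svSqAsc A i else 0

open Classical in
/-- Smallest eigenvalue of a self-adjoint matrix (junk value `0` if not self-adjoint). -/
def lambdaMin {n : ℕ} (A : Matrix (Fin n) (Fin n) 𝕂) : ℝ :=
  if hA : A.IsHermitian then ⨅ i, hA.eigenvalues i else 0

open Classical in
/-- Number of eigenvalues of a self-adjoint matrix lying in a set `I ⊆ ℝ`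
(junk value `0` if not self-adjoint). -/
def eigCountIn {n : ℕ} (A : Matrix (Fin n) (Fin n) 𝕂) (I : Set ℝ) : ℕ :=
  if hA : A.IsHermitian then (Finset.univ.filter fun i => hA.eigenvalues i ∈ I).card else 0

variable {n m k : ℕ}

/-- The constraint map `𝒜(Z)ᵢ = ⟨Aᵢ, Z⟩`. -/
def calA (A : Fin m → Matrix (Fin n) (Fin n) 𝕂) (Z : Matrix (Fin n) (Fin n) 𝕂) :
    Fin m → ℝ := fun i => finner (A i) Z

/-- The adjoint map `𝒜*(μ) = ∑ᵢ μᵢ Aᵢ`. -/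
def calAstar (A : Fin m → Matrix (Fin n) (Fin n) 𝕂) (μ : Fin m → ℝ) :
    Matrix (Fin n) (Fin n) 𝕂 := ∑ i, (μ i : 𝕂) • A i

/-- The SDP feasible set `𝒞`. -/
def SDPSet (A : Fin m → Matrix (Fin n) (Fin n) 𝕂) (b : Fin m → ℝ) :
    Set (Matrix (Fin n) (Fin n) 𝕂) :=
  {X | X.PosSemidef ∧ ∀ i, finner (A i) X = b i}

/-- The factorized feasible set `ℳ_k`. -/
def FactSet (A : Fin m → Matrix (Fin n) (Fin n) 𝕂) (b : Fin m → ℝ) (k : ℕ) :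
    Set (Matrix (Fin n) (Fin k) 𝕂) :=
  {Y | ∀ i, finner (A i) (Y * Yᴴ) = b i}

/-- The Gram matrix `G(Y)ᵢⱼ = ⟨AᵢY, AⱼY⟩`. -/
def gram (A : Fin m → Matrix (Fin n) (Fin n) 𝕂) (Y : Matrix (Fin n) (Fin k) 𝕂) :
    Matrix (Fin m) (Fin m) ℝ :=
  Matrix.of fun i j => finner (A i * Y) (A j * Y)

/-- The four Moore–Penrose identities. -/
def IsMoorePenrose {m : ℕ} (G H : Matrix (Fin m) (Fin m) ℝ) : Prop :=
  G * H * G = G ∧ H * G * H = H ∧ (G * H)ᵀ = G * H ∧ (H * G)ᵀ = H * G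

open Classical in
/-- The Moore–Penrose pseudo-inverse (the unique matrix satisfying the four
Moore–Penrose identities; junk value `0` if none exists). -/
def pinv {m : ℕ} (G : Matrix (Fin m) (Fin m) ℝ) : Matrix (Fin m) (Fin m) ℝ :=
  if h : ∃ H, IsMoorePenrose G H then h.choose else 0

/-- The matrix `S(Y) = C − 𝒜*(G(Y)† 𝒜(C Y Yᴴ))`. -/
def Smat (A : Fin m → Matrix (Fin n) (Fin n) 𝕂) (C : Matrix (Fin n) (Fin n) 𝕂)
    (Y : Matrix (Fin n) (Fin k) 𝕂) : Matrix (Fin n) (Fin n) 𝕂 :=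
  C - calAstar A (pinv (gram A Y) *ᵥ calA A (C * (Y * Yᴴ)))

/-- `Y` is an `εg`-approximate first-order stationary point of the factorized problem. -/
def IsFOSP (A : Fin m → Matrix (Fin n) (Fin n) 𝕂) (b : Fin m → ℝ)
    (C : Matrix (Fin n) (Fin n) 𝕂) (Y : Matrix (Fin n) (Fin k) 𝕂) (εg : ℝ) : Prop :=
  Y ∈ FactSet A b k ∧ fnorm ((2 : 𝕂) • (Smat A C Y * Y)) ≤ εg

/-- `Y` is an `(εg, εH)`-approximate second-order stationary point of the factorized problem. -/
def IsSOSP (A : Fin m → Matrix (Fin n) (Fin n) 𝕂) (b : Fin m → ℝ)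
    (C : Matrix (Fin n) (Fin n) 𝕂) (Y : Matrix (Fin n) (Fin k) 𝕂) (εg εH : ℝ) : Prop :=
  IsFOSP A b C Y εg ∧
    ∀ V : Matrix (Fin n) (Fin k) 𝕂, (∀ i, finner (A i * Y) V = 0) →
      -εH * (fnorm V) ^ 2 ≤ finner V (Smat A C Y * V)

/-- The smooth-manifold assumption (Assumption 1). -/
def SmoothAssumption (A : Fin m → Matrix (Fin n) (Fin n) 𝕂) (b : Fin m → ℝ) : Prop :=
  ∀ k' : ℕ, k' ≤ n → (FactSet A b k').Nonempty →
    (∀ Y ∈ FactSet A b k', LinearIndependent ℝ fun i => A i * Y) ∨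
    (∃ U : Set (Matrix (Fin n) (Fin k') 𝕂), IsOpen U ∧ FactSet A b k' ⊆ U ∧
      ∃ d : ℕ, ∀ Y ∈ U,
        Module.finrank ℝ (Submodule.span ℝ (Set.range fun i => A i * Y)) = d)

/-- A real Gaussian Wigner matrix with variance `σ²`: a random real symmetric matrix whose
on-and-above-diagonal entries are independent centered Gaussians `N(0, σ²)`. -/
structure IsRealWigner {Ω : Type*} [MeasurableSpace Ω] (μ : Measure Ω) {n : ℕ} (σ : ℝ)
    (W : Ω → Matrix (Fin n) (Fin n) ℝ) : Prop where
  symm : ∀ ω, (W ω)ᵀ = W ω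
  meas : ∀ i j, Measurable fun ω => W ω i j
  indep : iIndepFun (β := fun _ : {p : Fin n × Fin n // p.1 ≤ p.2} => ℝ)
    (fun p ω => W ω p.val.1 p.val.2) μ
  gauss : ∀ i j : Fin n, i ≤ j →
    Measure.map (fun ω => W ω i j) μ = gaussianReal 0 ⟨σ ^ 2, sq_nonneg σ⟩

/-- The independent real coordinates of a complex Hermitian random matrix:
diagonal entries, and real/imaginary parts of the above-diagonal entries. -/
def wignerParts {Ω : Type*} {n : ℕ} (W : Ω → Matrix (Fin n) (Fin n) ℂ) :
    (Fin n ⊕ {p : Fin n × Fin n // p.1 < p.2} × Bool) → Ω → ℝ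
  | Sum.inl i => fun ω => (W ω i i).re
  | Sum.inr (p, false) => fun ω => (W ω p.val.1 p.val.2).re
  | Sum.inr (p, true) => fun ω => (W ω p.val.1 p.val.2).im

/-- A complex Gaussian Wigner matrix with variance `σ²`: a random Hermitian matrix whose
on-and-above-diagonal entries are independent, the diagonal entries being real `N(0, σ²)` and
the above-diagonal entries having independent `N(0, σ²/2)` real and imaginary parts. -/
structure IsComplexWigner {Ω : Type*} [MeasurableSpace Ω] (μ : Measure Ω) {n : ℕ} (σ : ℝ)
    (W : Ω → Matrix (Fin n) (Fin n) ℂ) : Prop where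
  herm : ∀ ω, (W ω).IsHermitian
  meas : ∀ i j, Measurable fun ω => W ω i j
  indep : iIndepFun (β := fun _ : Fin n ⊕ {p : Fin n × Fin n // p.1 < p.2} × Bool => ℝ)
    (wignerParts W) μ
  diag : ∀ i : Fin n,
    Measure.map (fun ω => (W ω i i).re) μ = gaussianReal 0 ⟨σ ^ 2, sq_nonneg σ⟩
  off_re : ∀ i j : Fin n, i < j →
    Measure.map (fun ω => (W ω i j).re) μ = gaussianReal 0 ⟨σ ^ 2 / 2, by positivity⟩
  off_im : ∀ i j : Fin n, i < j →
    Measure.map (fun ω => (W ω i j).im) μ = gaussianReal 0 ⟨σ ^ 2 / 2, by positivity⟩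

/-!
Let `V` be the `n × min(n, k)` matrix whose columns are the eigenvectors of `Aᴴ A` for its `k`
smallest eigenvalues. Then `‖A V‖²` is exactly the sum of the `k` smallest `σᵢ(A)²`. For `B`, Ky
Fan's minimum principle gives `‖B V‖² = Re tr (Vᴴ Bᴴ B V) ≥ ∑` of the `k` smallest eigenvalues of
`Bᴴ B`: in an eigenbasis of `Bᴴ B` the trace is `∑ₗ νₗ tₗ` with weights `tₗ ∈ [0, 1]` of total
mass `min(n, k)`, and such a weighted sum is smallest when the weight sits on the smallest `νₗ`.
Finally `X ↦ ‖X V‖` is a seminorm bounded by the Frobenius norm, so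
`‖B V‖ ≤ ‖A V‖ + ‖(A - B) V‖ ≤ ‖A V‖ + ‖A - B‖`.
-/

section

open Finset

theorem _root_.Finset.sum_le_sum_mul_of_mem_le_notMem {ι : Type*} [Fintype ι]
    (f t : ι → ℝ) (s : Finset ι) (hs : ∀ i ∈ s, ∀ j ∉ s, f i ≤ f j)
    (ht₀ : ∀ i, 0 ≤ t i) (ht₁ : ∀ i, t i ≤ 1) (ht : ∑ i, t i = #s) :
    ∑ i ∈ s, f i ≤ ∑ i, f i * t i := by
  classical
  rcases s.eq_empty_or_nonempty with rfl | hne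
  · have : t = 0 := (Fintype.sum_eq_zero_iff_of_nonneg ht₀).1 (by simpa using ht)
    simp [this]
  obtain ⟨a, ha, hmax⟩ := s.exists_max_image f hne
  -- `f a` separates `f` on `s` from `f` off `s`; the deviations `t i - 𝟙ₛ i` sum to zero.
  have hterm : ∀ i, f a * (t i - if i ∈ s then 1 else 0) ≤
      f i * t i - if i ∈ s then f i else 0 := by
    intro i
    by_cases hi : i ∈ s
    · simp only [hi, if_true]
      nlinarith [hmax i hi, ht₁ i]
    · simp only [hi, if_false]
      nlinarith [hs a ha i hi, ht₀ i]
  have hsum := sum_le_sum fun i (_ : i ∈ univ) => hterm i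
  rw [← mul_sum, sum_sub_distrib, sum_sub_distrib, ht, sum_ite_mem, sum_ite_mem,
    univ_inter, sum_const, nsmul_one, sub_self, mul_zero] at hsum
  linarith

end

section

open Matrix
open scoped Matrix.Norms.Frobenius

variable {𝕜 : Type*} [RCLike 𝕜] {m n : Type*} [Fintype m]

theorem _root_.Matrix.re_conjTranspose_mul_self_apply (X : Matrix m n 𝕜) (j : n) :
    RCLike.re ((Xᴴ * X) j j) = ∑ i, ‖X i j‖ ^ 2 := by
  rw [mul_apply, map_sum]
  refine Finset.sum_congr rfl fun i _ => ?_
  rw [conjTranspose_apply, RCLike.star_def, RCLike.conj_mul, ← RCLike.ofReal_pow,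
    RCLike.ofReal_re]

theorem _root_.Matrix.re_conjTranspose_mul_diagonal_mul_apply [DecidableEq m]
    (C : Matrix m n 𝕜) (ν : m → ℝ) (j : n) :
    RCLike.re ((Cᴴ * (diagonal (RCLike.ofReal ∘ ν) : Matrix m m 𝕜) * C) j j) =
      ∑ l, ν l * ‖C l j‖ ^ 2 := by
  rw [Matrix.mul_assoc, mul_apply, map_sum]
  refine Finset.sum_congr rfl fun l _ => ?_
  rw [diagonal_mul, conjTranspose_apply, RCLike.star_def, Function.comp_apply, mul_left_comm,
    RCLike.conj_mul, ← RCLike.ofReal_pow, ← RCLike.ofReal_mul, RCLike.ofReal_re]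

theorem _root_.Matrix.sum_norm_sq_apply_left_eq_one_of_mem_unitaryGroup [DecidableEq m]
    {U : Matrix m m 𝕜} (hU : U ∈ unitaryGroup m 𝕜) (j : m) : ∑ i, ‖U i j‖ ^ 2 = 1 := by
  rw [← re_conjTranspose_mul_self_apply, ← star_eq_conjTranspose, mem_unitaryGroup_iff'.1 hU,
    one_apply_eq, RCLike.one_re]

theorem _root_.Matrix.sum_norm_sq_apply_right_eq_one_of_mem_unitaryGroup [DecidableEq m]
    {U : Matrix m m 𝕜} (hU : U ∈ unitaryGroup m 𝕜) (i : m) : ∑ j, ‖U i j‖ ^ 2 = 1 := by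
  simpa [norm_star] using
    sum_norm_sq_apply_left_eq_one_of_mem_unitaryGroup (Unitary.star_mem hU) i

theorem _root_.Matrix.frobenius_norm_sq_eq_sum [Fintype n] (X : Matrix m n 𝕜) :
    ‖X‖ ^ 2 = ∑ i, ∑ j, ‖X i j‖ ^ 2 := by
  rw [frobenius_norm_def, ← Real.sqrt_eq_rpow, Real.sq_sqrt (by positivity)]
  simp

theorem _root_.Matrix.frobenius_norm_sq_eq_re_trace [Fintype n] (X : Matrix m n 𝕜) :
    ‖X‖ ^ 2 = RCLike.re (Xᴴ * X).trace := by
  simp only [frobenius_norm_sq_eq_sum, trace, diag_apply, map_sum,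
    re_conjTranspose_mul_self_apply]
  exact Finset.sum_comm

theorem _root_.Matrix.frobenius_norm_mul_unitary [Fintype n] [DecidableEq n] (X : Matrix m n 𝕜)
    {U : Matrix n n 𝕜} (hU : U ∈ unitaryGroup n 𝕜) : ‖X * U‖ = ‖X‖ := by
  refine (pow_left_inj₀ (norm_nonneg _) (norm_nonneg _) two_ne_zero).1 ?_
  rw [frobenius_norm_sq_eq_re_trace, frobenius_norm_sq_eq_re_trace, conjTranspose_mul,
    Matrix.mul_assoc, trace_mul_comm]
  simp only [Matrix.mul_assoc, ← star_eq_conjTranspose, mem_unitaryGroup_iff.1 hU,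
    Matrix.mul_one]

theorem _root_.Matrix.frobenius_norm_sq_submatrix_val (X : Matrix m n 𝕜) (s : Finset n) :
    ‖X.submatrix id ((↑) : s → n)‖ ^ 2 = ∑ j ∈ s, RCLike.re ((Xᴴ * X) j j) := by
  simp only [frobenius_norm_sq_eq_sum, re_conjTranspose_mul_self_apply]
  rw [Finset.sum_comm, ← Finset.sum_coe_sort s]
  rfl

theorem _root_.Matrix.frobenius_norm_sq_mul_submatrix_val [Fintype n] (X : Matrix m n 𝕜)
    (U : Matrix n n 𝕜) (s : Finset n) :
    ‖(X * U).submatrix id ((↑) : s → n)‖ ^ 2 =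
      ∑ j ∈ s, RCLike.re ((star U * (Xᴴ * X) * U) j j) := by
  rw [frobenius_norm_sq_submatrix_val, conjTranspose_mul, star_eq_conjTranspose]
  simp only [Matrix.mul_assoc]

theorem _root_.Matrix.frobenius_norm_submatrix_val_le [Fintype n] (X : Matrix m n 𝕜)
    (s : Finset n) : ‖X.submatrix id ((↑) : s → n)‖ ≤ ‖X‖ := by
  refine (pow_le_pow_iff_left₀ (norm_nonneg _) (norm_nonneg _) two_ne_zero).1 ?_
  rw [frobenius_norm_sq_submatrix_val, frobenius_norm_sq_eq_re_trace, trace, map_sum]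
  refine Finset.sum_le_sum_of_subset_of_nonneg s.subset_univ fun j _ _ => ?_
  rw [re_conjTranspose_mul_self_apply]
  positivity

theorem _root_.Matrix.IsHermitian.sum_eigenvalues_le_sum_re_diag_conj [DecidableEq m]
    {H : Matrix m m 𝕜} (hH : H.IsHermitian) {U : Matrix m m 𝕜} (hU : U ∈ unitaryGroup m 𝕜)
    {s s' : Finset m} (hcard : s'.card = s.card)
    (hs' : ∀ i ∈ s', ∀ j ∉ s', hH.eigenvalues i ≤ hH.eigenvalues j) :
    ∑ i ∈ s', hH.eigenvalues i ≤ ∑ j ∈ s, RCLike.re ((star U * H * U) j j) := by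
  set C := star (hH.eigenvectorUnitary : Matrix m m 𝕜) * U
  have hC : C ∈ unitaryGroup m 𝕜 := mul_mem (Unitary.star_mem hH.eigenvectorUnitary.2) hU
  have hconj : star U * H * U = Cᴴ * diagonal (RCLike.ofReal ∘ hH.eigenvalues) * C := by
    conv_lhs => rw [hH.spectral_theorem, Unitary.conjStarAlgAut_apply]
    simp only [C, ← star_eq_conjTranspose, star_mul, star_star, Matrix.mul_assoc]
  set t : m → ℝ := fun l => ∑ j ∈ s, ‖C l j‖ ^ 2
  have ht₁ : ∀ l, t l ≤ 1 := fun l =>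
    (Finset.sum_le_sum_of_subset_of_nonneg s.subset_univ fun _ _ _ => by positivity).trans_eq
      (sum_norm_sq_apply_right_eq_one_of_mem_unitaryGroup hC l)
  have ht : ∑ l, t l = s'.card := by
    simp only [t, hcard]
    rw [Finset.sum_comm]
    simp [sum_norm_sq_apply_left_eq_one_of_mem_unitaryGroup hC]
  calc ∑ i ∈ s', hH.eigenvalues i ≤ ∑ l, hH.eigenvalues l * t l :=
        Finset.sum_le_sum_mul_of_mem_le_notMem _ t s' hs' (fun _ => by positivity) ht₁ ht
    _ = ∑ j ∈ s, RCLike.re ((star U * H * U) j j) := by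
        simp only [hconj, re_conjTranspose_mul_diagonal_mul_apply, t, Finset.mul_sum]
        exact Finset.sum_comm

end

section

open Tuple

variable {α : Type*} [LinearOrder α] {n : ℕ}

def _root_.Tuple.smallestIndices (k : ℕ) (f : Fin n → α) : Finset (Fin n) :=
  (Finset.univ.filter fun i : Fin n => (i : ℕ) < k).map (sort f).toEmbedding

theorem _root_.Tuple.card_smallestIndices (k : ℕ) (f : Fin n → α) :
    (smallestIndices k f).card = min n k := by
  simp [smallestIndices, Fin.card_filter_val_lt]

theorem _root_.Tuple.le_of_mem_smallestIndices_of_notMem {k : ℕ} {f : Fin n → α} {i j : Fin n}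
    (hi : i ∈ smallestIndices k f) (hj : j ∉ smallestIndices k f) : f i ≤ f j := by
  simp only [smallestIndices, Finset.mem_map_equiv, Finset.mem_filter, Finset.mem_univ,
    true_and, not_lt] at hi hj
  simpa using monotone_sort f (Fin.le_def.2 (hi.trans_le hj).le)

theorem _root_.Tuple.sum_smallestIndices [AddCommMonoid α] (k : ℕ) (f : Fin n → α) :
    ∑ i ∈ smallestIndices k f, f i = ∑ i : Fin n, if (i : ℕ) < k then f (sort f i) else 0 := by
  rw [smallestIndices, Finset.sum_map, Finset.sum_filter]
  rfl

end

section

open scoped Matrix.Norms.Frobenius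

theorem sumSqSmallestSV_eq_sum_smallestIndices (A : Matrix (Fin n) (Fin n) 𝕂) :
    sumSqSmallestSV k A = ∑ i ∈ Tuple.smallestIndices k
      (Matrix.isHermitian_conjTranspose_mul_self A).eigenvalues,
        (Matrix.isHermitian_conjTranspose_mul_self A).eigenvalues i :=
  (Tuple.sum_smallestIndices _ _).symm

theorem fnorm_eq_frobenius_norm (X : Matrix (Fin n) (Fin k) 𝕂) : fnorm X = ‖X‖ := by
  rw [fnorm, finner, ← Matrix.frobenius_norm_sq_eq_re_trace, Real.sqrt_sq (norm_nonneg _)]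

theorem frobenius_norm_sq_mul_eigenvectorUnitary_submatrix (A : Matrix (Fin n) (Fin n) 𝕂)
    (hAA : (Aᴴ * A).IsHermitian) :
    ‖(A * (hAA.eigenvectorUnitary : Matrix (Fin n) (Fin n) 𝕂)).submatrix id
      ((↑) : Tuple.smallestIndices k hAA.eigenvalues → Fin n)‖ ^ 2 = sumSqSmallestSV k A := by
  have hdiag := hAA.conjStarAlgAut_star_eigenvectorUnitary
  rw [Unitary.conjStarAlgAut_apply, Unitary.coe_star, star_star] at hdiag
  rw [Matrix.frobenius_norm_sq_mul_submatrix_val, hdiag, sumSqSmallestSV_eq_sum_smallestIndices]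
  simp only [Matrix.diagonal_apply_eq, Function.comp_apply, RCLike.ofReal_re]

theorem sumSqSmallestSV_le_frobenius_norm_sq_mul_submatrix (B : Matrix (Fin n) (Fin n) 𝕂)
    {U : Matrix (Fin n) (Fin n) 𝕂} (hU : U ∈ Matrix.unitaryGroup (Fin n) 𝕂)
    {s : Finset (Fin n)} (hs : s.card = min n k) :
    sumSqSmallestSV k B ≤ ‖(B * U).submatrix id ((↑) : s → Fin n)‖ ^ 2 := by
  rw [Matrix.frobenius_norm_sq_mul_submatrix_val, sumSqSmallestSV_eq_sum_smallestIndices]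
  exact (Matrix.isHermitian_conjTranspose_mul_self B).sum_eigenvalues_le_sum_re_diag_conj hU
    (by rw [Tuple.card_smallestIndices, hs])
    fun i hi j hj => Tuple.le_of_mem_smallestIndices_of_notMem hi hj

end

theorem sqrt_sumSqSmallestSV_ge_sub_frobenius_general
    {𝕂 : Type*} [RCLike 𝕂] {n : ℕ} (k : ℕ)
    (A B : Matrix (Fin n) (Fin n) 𝕂) :
    Real.sqrt (sumSqSmallestSV k B) - fnorm (A - B) ≤
      Real.sqrt (sumSqSmallestSV k A) := by
  open scoped Matrix.Norms.Frobenius in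
  set hAA := Matrix.isHermitian_conjTranspose_mul_self A
  set U : Matrix (Fin n) (Fin n) 𝕂 := ↑hAA.eigenvectorUnitary
  have hU : U ∈ Matrix.unitaryGroup (Fin n) 𝕂 := hAA.eigenvectorUnitary.2
  set S := Tuple.smallestIndices k hAA.eigenvalues
  let P : Matrix (Fin n) (Fin n) 𝕂 → Matrix (Fin n) S 𝕂 := fun X => (X * U).submatrix id (↑)
  have hPA : ‖P A‖ = √(sumSqSmallestSV k A) := by
    rw [← frobenius_norm_sq_mul_eigenvectorUnitary_submatrix A hAA, Real.sqrt_sq (norm_nonneg _)]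
  have hPB : √(sumSqSmallestSV k B) ≤ ‖P B‖ :=
    (Real.sqrt_le_sqrt (sumSqSmallestSV_le_frobenius_norm_sq_mul_submatrix B hU
      (Tuple.card_smallestIndices k _))).trans_eq (Real.sqrt_sq (norm_nonneg _))
  have hPE : ‖P (A - B)‖ ≤ fnorm (A - B) := by
    rw [fnorm_eq_frobenius_norm, ← Matrix.frobenius_norm_mul_unitary _ hU]
    exact Matrix.frobenius_norm_submatrix_val_le _ S
  have hPsub : P B = P A - P (A - B) := by
    ext i j
    simp [P, Matrix.sub_mul]
  have htriangle := norm_sub_le (P A) (P (A - B))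
  rw [← hPsub] at htriangle
  linarith

/-- perturbation bound for the k smallest singular values of
self-adjoint matrices. -/
theorem sqrt_sumSqSmallestSV_ge_sub_frobenius
    {𝕂 : Type*} [RCLike 𝕂] {n : ℕ} (k : ℕ) (hk1 : 1 ≤ k) (hkn : k ≤ n)
    (A B : Matrix (Fin n) (Fin n) 𝕂) (hA : A.IsHermitian) (hB : B.IsHermitian) :
    Real.sqrt (sumSqSmallestSV k B) - fnorm (A - B) ≤
      Real.sqrt (sumSqSmallestSV k A) :=
  sqrt_sumSqSmallestSV_ge_sub_frobenius_general k A B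

end SmoothedBM
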